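/- arXiv:0811.2251 — 5 statements merged into one kernel-verified Lean document; each statement's English description precedes it below -/
import Mathlib

section
/- (Continuity Lemma) Let U ⊆ ℝ^n be an open set of finite Lebesgue measure and let d ≥ 1. Let V(d) denote the (finite-dimensional) real vector space of polynomials in n variables of total degree at most d, with its standard topology. Then the function P ↦ Vol{x ∈ U : P(x) > 0} is continuous on V(d) \ {0}. -/
/-!
The zero set of a nonzero real polynomial is Lebesgue-null (induction on the number of variables
and Fubini: off the null zero set of the leading coefficient in the first variable, each slice is
the finite root set of a nonzero univariate polynomial). If the coefficients of `Q` are `δ`-close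
to those of `P` and both have degree at most `d`, then `|Q - P| ≤ δ w` for a fixed continuous
weight `w`, so the sets `{Q > 0}` and `{P > 0}` differ only inside `{|P| ≤ δ w}`. Within `U`
these sets decrease, as `δ ↓ 0`, to the null set `{P = 0}`, so by continuity from above of the
finite measure `volume.restrict U` their measure tends to `0`.
-/

open MeasureTheory Filter Topology MvPolynomial
open scoped symmDiff

namespace MvPolynomial

theorem volume_setOf_eval_eq_zero {n : ℕ} {P : MvPolynomial (Fin n) ℝ} (hP : P ≠ 0) :
    volume {x : Fin n → ℝ | eval x P = 0} = 0 := by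
  induction n with
  | zero =>
    obtain ⟨c, rfl⟩ := C_surjective (Fin 0) P
    simp_all
  | succ n ih =>
    set f := finSuccEquiv ℝ n P
    have hlead : f.leadingCoeff ≠ 0 := by simpa [f] using hP
    have hZ : MeasurableSet {x : Fin (n + 1) → ℝ | eval x P = 0} :=
      measurableSet_eq_fun (continuous_eval P).measurable measurable_const
    let e := MeasurableEquiv.piFinSuccAbove (fun _ : Fin (n + 1) => ℝ) 0
    rw [← (volume_preserving_piFinSuccAbove (fun _ : Fin (n + 1) => ℝ) 0).symm.measure_preimage
      hZ.nullMeasurableSet, Measure.volume_eq_prod,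
      Measure.prod_apply_symm (hZ.preimage e.symm.measurable)]
    refine (lintegral_congr_ae ?_).trans lintegral_zero
    filter_upwards [measure_eq_zero_iff_ae_notMem.mp (ih hlead)] with s hs
    have hmap : f.map (eval s) ≠ 0 := fun h => hs <| by
      simpa [Polynomial.coeff_map] using congrArg (Polynomial.coeff · f.natDegree) h
    have hslice : (fun t => (t, s)) ⁻¹' (e.symm ⁻¹' {x | eval x P = 0}) =
        {t | (f.map (eval s)).IsRoot t} := by
      ext t
      have hcons : e.symm (t, s) = Fin.cons t s := Fin.insertNth_zero' t s
      simp only [Set.mem_preimage, Set.mem_ofPred_eq, hcons, eval_eq_eval_mv_eval', f,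
        Polynomial.IsRoot.def]
    rw [hslice]
    exact (Polynomial.finite_setOfPred_isRoot hmap).measure_zero _

theorem volume_setOf_eval_ofLp_eq_zero {n : ℕ} {P : MvPolynomial (Fin n) ℝ} (hP : P ≠ 0) :
    volume {x : EuclideanSpace ℝ (Fin n) | eval (fun j => x j) P = 0} = 0 :=
  ((EuclideanSpace.volume_preserving_symm_measurableEquiv_toLp (Fin n)).measure_preimage
    (measurableSet_eq_fun (continuous_eval P).measurable measurable_const).nullMeasurableSet).trans
    (volume_setOf_eval_eq_zero hP)

variable {σ : Type*}

theorem abs_eval_le_mul_sum_of_support_subset {p : MvPolynomial σ ℝ} {s : Finset (σ →₀ ℕ)}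
    (hs : p.support ⊆ s) {δ : ℝ} (hδ : ∀ m, |p.coeff m| ≤ δ) (x : σ → ℝ) :
    |eval x p| ≤ δ * ∑ m ∈ s, |∏ i ∈ m.support, x i ^ m i| := by
  have hδ0 : 0 ≤ δ := (abs_nonneg _).trans (hδ 0)
  rw [eval_eq, Finset.mul_sum]
  calc |∑ m ∈ p.support, p.coeff m * ∏ i ∈ m.support, x i ^ m i|
      ≤ ∑ m ∈ p.support, δ * |∏ i ∈ m.support, x i ^ m i| :=
        (Finset.abs_sum_le_sum_abs _ _).trans <| Finset.sum_le_sum fun m _ => by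
          rw [abs_mul]; exact mul_le_mul_of_nonneg_right (hδ m) (abs_nonneg _)
    _ ≤ ∑ m ∈ s, δ * |∏ i ∈ m.support, x i ^ m i| :=
        Finset.sum_le_sum_of_subset_of_nonneg hs fun _ _ _ => by positivity

theorem support_subset_Iic_of_totalDegree_le [Finite σ] [DecidableEq σ] {R : Type*}
    [CommSemiring R] {p : MvPolynomial σ R} {d : ℕ} (hp : p.totalDegree ≤ d) :
    p.support ⊆ Finset.Iic (Finsupp.equivFunOnFinite.symm fun _ => d) := fun m hm =>
  Finset.mem_Iic.mpr fun i => (m.le_degree i).trans ((le_totalDegree hm).trans hp)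

end MvPolynomial

theorem symmDiff_setOf_pos_subset {X : Type*} {F G t : X → ℝ} (h : ∀ x, |G x - F x| ≤ t x) :
    {x | 0 < G x} ∆ {x | 0 < F x} ⊆ {x | |F x| ≤ t x} := by
  rintro x (⟨hG, hF⟩ | ⟨hF, hG⟩) <;>
    simp only [Set.mem_ofPred_eq, not_lt] at hG hF ⊢ <;>
    cases abs_le.mp (h x) <;> rw [abs_le] <;> constructor <;> linarith

section

variable {X : Type*} [MeasurableSpace X] {μ : Measure X} [IsFiniteMeasure μ] {F w : X → ℝ}

theorem tendsto_measure_setOf_abs_le_mul (hF : Measurable F) (hw : Measurable w)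
    (hF0 : μ {x | F x = 0} = 0) :
    Tendsto (fun r : ℝ => μ {x | |F x| ≤ r * w x}) (𝓝[>] 0) (𝓝 0) := by
  -- monotone in `r`, since `|F x| ≤ r * w x` with `r > 0` forces `0 ≤ w x`
  have hmono : ∀ r r' : ℝ, 0 < r → r ≤ r' →
      {x | |F x| ≤ r * w x} ⊆ {x | |F x| ≤ r' * w x} := fun r r' hr hrr' x (hx : _ ≤ _) =>
    hx.trans (mul_le_mul_of_nonneg_right hrr'
      (nonneg_of_mul_nonneg_right ((abs_nonneg _).trans hx) hr))
  have hinter : (⋂ r > (0 : ℝ), {x | |F x| ≤ r * w x}) ⊆ {x | F x = 0} := by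
    intro x hx
    simp only [Set.mem_iInter] at hx
    have hlim : Tendsto (fun r : ℝ => r * w x) (𝓝[>] 0) (𝓝 0) :=
      ((continuous_mul_const (w x)).tendsto' 0 0 (zero_mul _)).mono_left nhdsWithin_le_nhds
    exact abs_nonpos_iff.mp <|
      ge_of_tendsto hlim (eventually_nhdsWithin_of_forall fun r hr => hx r hr)
  have := tendsto_measure_biInter_gt (μ := μ)
    (fun r _ => (measurableSet_le hF.abs (hw.const_mul r)).nullMeasurableSet) hmono
    ⟨1, one_pos, measure_ne_top μ _⟩
  rwa [measure_mono_null hinter hF0] at this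

theorem exists_pos_abs_measureReal_setOf_pos_sub_lt (hF : Measurable F) (hw : Measurable w)
    (hF0 : μ {x | F x = 0} = 0) {ε : ℝ} (hε : 0 < ε) :
    ∃ δ > 0, ∀ G : X → ℝ, Measurable G → (∀ x, |G x - F x| ≤ δ * w x) →
      |μ.real {x | 0 < G x} - μ.real {x | 0 < F x}| < ε := by
  obtain ⟨δ, hsmall, hδ⟩ := ((tendsto_measure_setOf_abs_le_mul hF hw hF0).eventually
    (gt_mem_nhds (ENNReal.ofReal_pos.2 hε))).and self_mem_nhdsWithin |>.exists
  refine ⟨δ, hδ, fun G hGm hG => ?_⟩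
  calc |μ.real {x | 0 < G x} - μ.real {x | 0 < F x}|
      ≤ μ.real {x | |F x| ≤ δ * w x} :=
        (abs_measureReal_sub_le_measureReal_symmDiff
          (measurableSet_lt measurable_const hGm).nullMeasurableSet
          (measurableSet_lt measurable_const hF).nullMeasurableSet).trans
          (measureReal_mono (symmDiff_setOf_pos_subset hG))
    _ < ε := ENNReal.toReal_lt_of_lt_ofReal hsmall

end

theorem continuity_lemma_general (n d : ℕ)
    (U : Set (EuclideanSpace ℝ (Fin n))) (hUvol : volume U < ⊤)
    (P : MvPolynomial (Fin n) ℝ) (hP : P ≠ 0) (hPd : P.totalDegree ≤ d)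
    (ε : ℝ) (hε : 0 < ε) :
    ∃ δ : ℝ, 0 < δ ∧
      ∀ Q : MvPolynomial (Fin n) ℝ, Q.totalDegree ≤ d →
        (∀ m : Fin n →₀ ℕ, |Q.coeff m - P.coeff m| < δ) →
        |(volume {x ∈ U | 0 < MvPolynomial.eval (fun j => x j) Q}).toReal
          - (volume {x ∈ U | 0 < MvPolynomial.eval (fun j => x j) P}).toReal| < ε := by
  classical
  have : IsFiniteMeasure (volume.restrict U) := isFiniteMeasure_restrict.2 hUvol.ne
  have heval (R : MvPolynomial (Fin n) ℝ) :
      Continuous fun x : EuclideanSpace ℝ (Fin n) => eval (fun j => x j) R :=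
    (continuous_eval R).comp (PiLp.continuous_ofLp 2 _)
  have hvol (R : MvPolynomial (Fin n) ℝ) : volume {x ∈ U | 0 < eval (fun j => x j) R} =
      volume.restrict U {x | 0 < eval (fun j => x j) R} := by
    rw [Measure.restrict_apply (measurableSet_lt measurable_const (heval R).measurable),
      Set.inter_comm]
    rfl
  set s := Finset.Iic (Finsupp.equivFunOnFinite.symm fun _ : Fin n => d)
  obtain ⟨δ, hδ, hclose⟩ := exists_pos_abs_measureReal_setOf_pos_sub_lt (heval P).measurable
    (w := fun x => ∑ m ∈ s, |∏ i ∈ m.support, x i ^ m i|) (by fun_prop)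
    (nonpos_iff_eq_zero.mp <| (Measure.restrict_apply_le U _).trans_eq
      (volume_setOf_eval_ofLp_eq_zero hP)) hε
  refine ⟨δ, hδ, fun Q hQd hQP => ?_⟩
  rw [hvol Q, hvol P]
  refine hclose _ (heval Q).measurable fun x => ?_
  rw [← map_sub]
  exact abs_eval_le_mul_sum_of_support_subset
    (support_subset_Iic_of_totalDegree_le ((totalDegree_sub Q P).trans (max_le hQd hPd)))
    (fun m => by rw [coeff_sub]; exact (hQP m).le) _

/-- **Continuity Lemma.** Let `U ⊆ ℝ^n` be open of finite measure.  On the finite-dimensional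
space `V(d)` of polynomials of total degree at most `d`, the function
`P ↦ Vol {x ∈ U | P(x) > 0}` is continuous away from `0`.  Continuity (with respect to the
standard topology of `V(d)`, here realized by the sup-norm on coefficients) is expressed in
`ε`-`δ` form at an arbitrary nonzero `P ∈ V(d)`. -/
theorem continuity_lemma (n d : ℕ) (hd : 1 ≤ d)
    (U : Set (EuclideanSpace ℝ (Fin n))) (hUopen : IsOpen U) (hUvol : volume U < ⊤)
    (P : MvPolynomial (Fin n) ℝ) (hP : P ≠ 0) (hPd : P.totalDegree ≤ d)
    (ε : ℝ) (hε : 0 < ε) :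
    ∃ δ : ℝ, 0 < δ ∧
      ∀ Q : MvPolynomial (Fin n) ℝ, Q.totalDegree ≤ d →
        (∀ m : Fin n →₀ ℕ, |Q.coeff m - P.coeff m| < δ) →
        |(volume {x ∈ U | 0 < MvPolynomial.eval (fun j => x j) Q}).toReal
          - (volume {x ∈ U | 0 < MvPolynomial.eval (fun j => x j) P}).toReal| < ε :=
  continuity_lemma_general n d U hUvol P hP hPd ε hε
end

section
/- Let P be a nonzero real polynomial in n variables of total degree at most d, with zero set Z = {x ∈ ℝ^n : P(x) = 0}, and let v ∈ ℝ^n be a unit vector. Then for H^{n-1}-almost every y ∈ v^⊥, the line π_v^{-1}{y} = {y + t v : t ∈ ℝ} meets Z in at most d points. -/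
/-!
Restricted to the line `y + ℝ v`, the polynomial `P` becomes a univariate polynomial of degree at
most `d`, so the line meets the zero set in at most `d` points unless `P` vanishes on the whole
line. The zero set of a nonzero polynomial is Lebesgue-null (induction on the number of variables
and Fubini), and `(y, t) ↦ y + t v` identifies `v^⊥ × ℝ` with `ℝ^n` linearly, carrying the product
of Haar measures to a Haar measure. By Fubini again, almost every `y ∈ v^⊥` has a point of its
line off the zero set; on `v^⊥` the measure `H^{n-1}` is a Haar measure.
-/

open MeasureTheory MvPolynomial Module
open scoped Polynomial

namespace MvPolynomial

variable {σ R : Type*} [CommRing R]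

noncomputable def restrictLine (p : MvPolynomial σ R) (x v : σ → R) : R[X] :=
  aeval (fun i => Polynomial.C (x i) + Polynomial.C (v i) * Polynomial.X) p

theorem eval_restrictLine (p : MvPolynomial σ R) (x v : σ → R) (t : R) :
    (p.restrictLine x v).eval t = eval (x + t • v) p := by
  induction p using MvPolynomial.induction_on with
  | C a => simp [restrictLine]
  | add p q hp hq => simp only [restrictLine, map_add, Polynomial.eval_add] at *; rw [hp, hq]
  | mul_X p i hp =>
    simp only [restrictLine, map_mul, Polynomial.eval_mul] at *
    rw [hp, aeval_X]
    simp only [Polynomial.eval_add, Polynomial.eval_mul, Polynomial.eval_C, Polynomial.eval_X,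
      eval_X, Pi.add_apply, Pi.smul_apply, smul_eq_mul]
    ring

theorem natDegree_restrictLine_le (p : MvPolynomial σ R) (x v : σ → R) :
    (p.restrictLine x v).natDegree ≤ p.totalDegree := by
  conv_lhs => rw [restrictLine, p.as_sum, map_sum]
  refine Polynomial.natDegree_sum_le_of_forall_le _ _ fun s hs => ?_
  rw [aeval_monomial, Finsupp.prod]
  refine Polynomial.natDegree_mul_le.trans ?_
  rw [Polynomial.algebraMap_eq, Polynomial.natDegree_C, zero_add]
  refine (Polynomial.natDegree_prod_le _ _).trans
    ((Finset.sum_le_sum fun i _ => ?_).trans (le_totalDegree hs))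
  refine Polynomial.natDegree_pow_le_of_le _ ?_ |>.trans (mul_one _).le
  exact (Polynomial.natDegree_add_le _ _).trans
    (max_le (by simp) ((Polynomial.natDegree_C_mul_le _ _).trans Polynomial.natDegree_X_le))

theorem encard_setOf_eval_add_smul_eq_zero_le [IsDomain R] (p : MvPolynomial σ R) (x v : σ → R)
    (h : ∃ t : R, eval (x + t • v) p ≠ 0) :
    {t : R | eval (x + t • v) p = 0}.encard ≤ p.totalDegree := by
  classical
  have hq : p.restrictLine x v ≠ 0 := by
    rintro hq
    obtain ⟨t, ht⟩ := h
    exact ht (by rw [← eval_restrictLine, hq, Polynomial.eval_zero])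
  calc {t : R | eval (x + t • v) p = 0}.encard
      = (p.restrictLine x v).roots.toFinset.card := by
        rw [← Set.encard_coe_eq_coe_finsetCard]
        congr 1
        ext t
        simp [hq, eval_restrictLine]
    _ ≤ p.totalDegree := by
        exact_mod_cast (Multiset.toFinset_card_le _).trans
          ((Polynomial.card_roots' _).trans (natDegree_restrictLine_le p x v))

end MvPolynomial

theorem Polynomial.ae_eval_ne_zero {p : ℝ[X]} (hp : p ≠ 0) (μ : Measure ℝ)
    [NullSingletonClass μ] :
    ∀ᵐ t ∂μ, p.eval t ≠ 0 :=
  (Polynomial.finite_setOfPred_isRoot hp).countable.ae_notMem μ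

theorem MvPolynomial.ae_eval_ne_zero :
    ∀ {m : ℕ} {p : MvPolynomial (Fin m) ℝ}, p ≠ 0 → ∀ᵐ x : Fin m → ℝ, eval x p ≠ 0
  | 0, p, hp => by
    obtain ⟨a, rfl⟩ := C_surjective (Fin 0) p
    exact .of_forall fun x => by simpa using hp
  | m + 1, p, hp => by
    set Q := finSuccEquiv ℝ m p
    obtain ⟨k, hk⟩ : ∃ k, Q.coeff k ≠ 0 := by
      by_contra! h
      exact hp ((finSuccEquiv ℝ m).injective (by ext1 k; simp [Q, h k]))
    let e := MeasurableEquiv.piFinSuccAbove (fun _ : Fin (m + 1) => ℝ) 0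
    have he : MeasurePreserving e volume (volume.prod volume) :=
      volume_preserving_piFinSuccAbove (fun _ => ℝ) 0
    have hmeas : MeasurableSet {z : ℝ × (Fin m → ℝ) | eval (e.symm z) p ≠ 0} :=
      e.symm.measurable (isOpen_ne_fun p.continuous_eval continuous_const).measurableSet
    have hfiber : ∀ᵐ y : Fin m → ℝ, ∀ᵐ t : ℝ, eval (e.symm (t, y)) p ≠ 0 := by
      filter_upwards [ae_eval_ne_zero hk] with y hy
      have hQy : Q.map (eval y) ≠ 0 := fun h0 => hy (by simpa using congrArg (·.coeff k) h0)
      filter_upwards [Polynomial.ae_eval_ne_zero hQy volume] with t ht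
      have hcons : e.symm (t, y) = Fin.cons t y := by simp [e, Fin.consEquiv]
      rwa [hcons, eval_eq_eval_mv_eval']
    have hprod : ∀ᵐ z ∂(volume.prod volume), eval (e.symm z) p ≠ 0 :=
      (Measure.ae_prod_iff_ae_ae hmeas).2 <|
        (Measure.ae_ae_comm (p := fun y t => eval (e.symm (t, y)) p ≠ 0)
          (measurable_swap hmeas)).1 hfiber
    simpa using he.quasiMeasurePreserving.ae hprod

theorem ae_exists_add_smul_of_isCompl {E : Type*} [NormedAddCommGroup E] [NormedSpace ℝ E]
    [FiniteDimensional ℝ E] [MeasurableSpace E] [BorelSpace E] {K : Submodule ℝ E} {v : E}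
    (hv : v ≠ 0) (hK : IsCompl K (ℝ ∙ v)) (μ : Measure E) [μ.IsAddHaarMeasure]
    (ν : Measure K) [ν.IsAddHaarMeasure] {p : E → Prop} (h : ∀ᵐ x ∂μ, p x) :
    ∀ᵐ y : K ∂ν, ∃ t : ℝ, p ((y : E) + t • v) := by
  let Φ : (K × ℝ) ≃L[ℝ] E :=
    (((LinearEquiv.refl ℝ K).prodCongr (LinearEquiv.toSpanNonzeroSingleton ℝ E v hv)).trans
      (Submodule.prodEquivOfIsCompl K _ hK)).toContinuousLinearEquiv
  have hΦ : ∀ z, Φ z = z.1 + z.2 • v := fun z => rfl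
  have h' : ∀ᵐ x ∂(ν.prod volume).map Φ, p x :=
    (Measure.absolutelyContinuous_isAddHaarMeasure _ μ).ae_le h
  filter_upwards [Measure.ae_ae_of_ae_prod (ae_of_ae_map Φ.continuous.aemeasurable h')]
    with y hy
  simpa only [hΦ] using hy.exists

theorem ae_restrict_iff_ae_hausdorffMeasure_subtype {E : Type*} [EMetricSpace E]
    [MeasurableSpace E] [BorelSpace E] {K : Set E} (hK : MeasurableSet K) {d : ℝ} (hd : 0 ≤ d)
    {p : E → Prop} :
    (∀ᵐ x ∂(μH[d]).restrict K, p x) ↔ ∀ᵐ y : K ∂μH[d], p y := by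
  rw [← (MeasurableEmbedding.subtype_coe hK).ae_map_iff,
    isometry_subtype_coe.map_hausdorffMeasure (Or.inl hd), Subtype.range_coe]

/-- If `P` is a nonzero polynomial on `ℝ^n` of degree at most `d`, with zero set `Z`, and `v` is
a unit vector, then for `H^{n-1}`-almost every `y` in the hyperplane `v^⊥`, the line
`{y + t v : t ∈ ℝ}` meets `Z` in at most `d` points. -/
theorem line_meets_zero_set_in_le_d_points (n d : ℕ) (hn : 1 ≤ n)
    (P : MvPolynomial (Fin n) ℝ) (hP : P ≠ 0) (hPd : P.totalDegree ≤ d)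
    (v : EuclideanSpace ℝ (Fin n)) (hv : ‖v‖ = 1) :
    ∀ᵐ y ∂(μH[(n:ℝ) - 1]).restrict {y : EuclideanSpace ℝ (Fin n) | inner ℝ v y = (0:ℝ)},
      ({x : EuclideanSpace ℝ (Fin n) | MvPolynomial.eval (fun j => x j) P = 0}
          ∩ {x | ∃ t : ℝ, x = y + t • v}).encard ≤ (d : ℕ∞) := by
  have hv0 : v ≠ 0 := by rintro rfl; simp at hv
  set K := (ℝ ∙ v)ᗮ
  have hK : {y : EuclideanSpace ℝ (Fin n) | inner ℝ v y = (0:ℝ)} = K := by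
    ext y; exact Submodule.mem_orthogonal_singleton_iff_inner_right.symm
  have hdim : (n : ℝ) - 1 = finrank ℝ K := by
    have : Fact (finrank ℝ (EuclideanSpace ℝ (Fin n)) = (n - 1) + 1) := ⟨by simp; omega⟩
    rw [Submodule.finrank_orthogonal_span_singleton (n := n - 1) hv0]; push_cast [hn]; ring
  have hZ : ∀ᵐ x : EuclideanSpace ℝ (Fin n), eval x P ≠ 0 :=
    (PiLp.volume_preserving_ofLp (Fin n)).quasiMeasurePreserving.ae (ae_eval_ne_zero hP)
  rw [hK, hdim, ae_restrict_iff_ae_hausdorffMeasure_subtype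
    K.closed_of_finiteDimensional.measurableSet (by positivity)]
  filter_upwards [ae_exists_add_smul_of_isCompl hv0 (Submodule.isCompl_orthogonal _).symm volume
    μH[finrank ℝ K] hZ] with y ⟨t, ht⟩
  calc _ ≤ ((fun t : ℝ => (y : EuclideanSpace ℝ (Fin n)) + t • v) ''
          {t | eval (⇑(y : EuclideanSpace ℝ (Fin n)) + t • ⇑v) P = 0}).encard := by
        refine Set.encard_mono ?_
        rintro x ⟨hx, s, rfl⟩
        exact ⟨s, by rwa [Set.mem_ofPred_eq, ← WithLp.ofLp_smul, ← WithLp.ofLp_add], rfl⟩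
    _ ≤ _ := Set.encard_image_le _ _
    _ ≤ P.totalDegree := encard_setOf_eval_add_smul_eq_zero_le P _ _
        ⟨t, by rwa [← WithLp.ofLp_smul, ← WithLp.ofLp_add]⟩
    _ ≤ d := by exact_mod_cast hPd
end

section
/- Let n ≥ 1 and let v_1, …, v_n ∈ ℝ^n be unit vectors with ‖v_j − e_j‖ ≤ (100 n)^{-1} for each j, where e_1, …, e_n is the standard orthonormal basis. Let (S, μ) be a measure space and let N : S → ℝ^n be a measurable map with ‖N(x)‖ = 1 for all x ∈ S. Then μ(S) ≤ 2 ∑_{j=1}^n ∫_S |⟨v_j, N(x)⟩| dμ(x). (Applied to a hypersurface S with unit normal field N and μ its surface measure, this says Vol(S) ≤ 2 ∑_j V_S(v_j).) -/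
open MeasureTheory
open scoped ENNReal RealInnerProductSpace

/-!
Expanding a unit vector `x` in the standard basis gives `1 = ‖x‖ ≤ ∑ j |⟨e_j, x⟩|`, and replacing
each `e_j` by `v_j` costs at most `‖v_j - e_j‖ ≤ (100 n)⁻¹` per term, so
`∑ j |⟨v_j, x⟩| ≥ 1 - 1/100 ≥ 1/2`. Applying this at `x = N(s)` and integrating over `S` gives the
bound.
-/

section Perturbation

variable {ι E : Type*} [Fintype ι] [NormedAddCommGroup E] [InnerProductSpace ℝ E]

theorem OrthonormalBasis.norm_le_sum_abs_inner (b : OrthonormalBasis ι ℝ E) (x : E) :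
    ‖x‖ ≤ ∑ i, |⟪b i, x⟫| :=
  calc ‖x‖ = ‖∑ i, ⟪b i, x⟫ • b i‖ := by rw [b.sum_repr']
    _ ≤ ∑ i, ‖⟪b i, x⟫ • b i‖ := norm_sum_le _ _
    _ = ∑ i, |⟪b i, x⟫| := by simp only [norm_smul, b.orthonormal.1, mul_one, Real.norm_eq_abs]

theorem abs_real_inner_le_abs_real_inner_add {v w : E} {ε : ℝ} (h : ‖v - w‖ ≤ ε) (x : E) :
    |⟪w, x⟫| ≤ |⟪v, x⟫| + ε * ‖x‖ :=
  calc |⟪w, x⟫| = |⟪v, x⟫ - ⟪v - w, x⟫| := by rw [inner_sub_left, sub_sub_cancel]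
    _ ≤ |⟪v, x⟫| + |⟪v - w, x⟫| := abs_sub _ _
    _ ≤ |⟪v, x⟫| + ε * ‖x‖ := by
      gcongr
      exact (abs_real_inner_le_norm _ _).trans (by gcongr)

theorem OrthonormalBasis.norm_le_sum_abs_inner_add (b : OrthonormalBasis ι ℝ E) {v : ι → E}
    {ε : ℝ} (hv : ∀ i, ‖v i - b i‖ ≤ ε) (x : E) :
    ‖x‖ ≤ ∑ i, |⟪v i, x⟫| + Fintype.card ι * ε * ‖x‖ :=
  calc ‖x‖ ≤ ∑ i, |⟪b i, x⟫| := b.norm_le_sum_abs_inner x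
    _ ≤ ∑ i, (|⟪v i, x⟫| + ε * ‖x‖) :=
      Finset.sum_le_sum fun i _ => abs_real_inner_le_abs_real_inner_add (hv i) x
    _ = ∑ i, |⟪v i, x⟫| + Fintype.card ι * ε * ‖x‖ := by
      rw [Finset.sum_add_distrib, Finset.sum_const, Finset.card_univ, nsmul_eq_mul, mul_assoc]

theorem OrthonormalBasis.one_le_two_mul_sum_abs_inner (b : OrthonormalBasis ι ℝ E) {v : ι → E}
    {ε : ℝ} (hv : ∀ i, ‖v i - b i‖ ≤ ε) (hε : Fintype.card ι * ε ≤ 1 / 2) {x : E}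
    (hx : ‖x‖ = 1) : 1 ≤ 2 * ∑ i, |⟪v i, x⟫| := by
  have := b.norm_le_sum_abs_inner_add hv x
  rw [hx, mul_one] at this
  linarith

end Perturbation

theorem measure_le_two_sum_directed_general (n : ℕ)
    (v : Fin n → EuclideanSpace ℝ (Fin n))
    (hve : ∀ j, ‖v j - EuclideanSpace.single j (1:ℝ)‖ ≤ (100 * (n:ℝ))⁻¹)
    {S : Type*} [MeasurableSpace S] (μ : Measure S)
    (N : S → EuclideanSpace ℝ (Fin n)) (hNmeas : Measurable N)
    (hNunit : ∀ x, ‖N x‖ = 1) :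
    μ Set.univ ≤ 2 * ∑ j : Fin n, ∫⁻ x, ENNReal.ofReal |(inner ℝ (v j) (N x) : ℝ)| ∂μ := by
  have hε : (Fintype.card (Fin n) : ℝ) * (100 * (n:ℝ))⁻¹ ≤ 1 / 2 := by
    rw [Fintype.card_fin, mul_inv, ← mul_assoc, mul_comm, ← mul_assoc]
    calc (n:ℝ)⁻¹ * n * 100⁻¹ ≤ 1 * 100⁻¹ := by gcongr; exact inv_mul_le_one
      _ ≤ 1 / 2 := by norm_num
  have hpointwise (x : S) : (1 : ℝ≥0∞) ≤ 2 * ∑ j, ENNReal.ofReal |⟪v j, N x⟫| := by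
    have h := (EuclideanSpace.basisFun (Fin n) ℝ).one_le_two_mul_sum_abs_inner
      (by simpa using hve) hε (hNunit x)
    calc (1 : ℝ≥0∞) = ENNReal.ofReal 1 := ENNReal.ofReal_one.symm
      _ ≤ ENNReal.ofReal (2 * ∑ j, |⟪v j, N x⟫|) := ENNReal.ofReal_le_ofReal h
      _ = 2 * ∑ j, ENNReal.ofReal |⟪v j, N x⟫| := by
        rw [ENNReal.ofReal_mul zero_le_two, ENNReal.ofReal_ofNat,
          ENNReal.ofReal_sum_of_nonneg fun j _ => abs_nonneg _]
  have hmeas (j : Fin n) : Measurable fun x => ENNReal.ofReal |⟪v j, N x⟫| :=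
    ENNReal.measurable_ofReal.comp (measurable_const.inner hNmeas).abs
  calc μ Set.univ = ∫⁻ _, 1 ∂μ := lintegral_one.symm
    _ ≤ ∫⁻ x, 2 * ∑ j, ENNReal.ofReal |⟪v j, N x⟫| ∂μ := lintegral_mono hpointwise
    _ = 2 * ∑ j, ∫⁻ x, ENNReal.ofReal |⟪v j, N x⟫| ∂μ := by
      rw [lintegral_const_mul' _ _ ENNReal.ofNat_ne_top, lintegral_finsetSum _ fun j _ => hmeas j]

/-- If `v_1, …, v_n` are unit vectors with `‖v_j − e_j‖ ≤ (100 n)⁻¹`, and `N : S → ℝ^n` is a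
measurable unit-vector field on a measure space `(S, μ)`, then
`μ(S) ≤ 2 ∑_j ∫_S |⟨v_j, N(x)⟩| dμ(x)`.  (For a hypersurface `S` with unit normal `N` and
surface measure `μ`, this says `Vol(S) ≤ 2 ∑_j V_S(v_j)`.) -/
theorem measure_le_two_sum_directed (n : ℕ) (hn : 1 ≤ n)
    (v : Fin n → EuclideanSpace ℝ (Fin n))
    (hv : ∀ j, ‖v j‖ = 1)
    (hve : ∀ j, ‖v j - EuclideanSpace.single j (1:ℝ)‖ ≤ (100 * (n:ℝ))⁻¹)
    {S : Type*} [MeasurableSpace S] (μ : Measure S)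
    (N : S → EuclideanSpace ℝ (Fin n)) (hNmeas : Measurable N)
    (hNunit : ∀ x, ‖N x‖ = 1) :
    μ Set.univ ≤ 2 * ∑ j : Fin n, ∫⁻ x, ENNReal.ofReal |(inner ℝ (v j) (N x) : ℝ)| ∂μ :=
  measure_le_two_sum_directed_general n v hve μ N hNmeas hNunit
end

section
/- (Basic area estimate for polynomial hypersurfaces in a cube) There is a constant c(n) > 0 depending only on n such that the following holds. Let Q ⊆ ℝ^n be a cube of side length 1, and let P be a nonzero real polynomial in n variables that bisects Q, i.e. Vol{x ∈ Q : P(x) > 0} = Vol{x ∈ Q : P(x) < 0}. Then the zero set Z = {x : P(x) = 0} satisfies H^{n-1}(Z ∩ Q) ≥ c(n), where H^{n-1} is (n-1)-dimensional Hausdorff measure. -/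
/-!
Let `Z` be the zero set of `P`. If `Z ∩ Q` has positive volume, then `H^{n-1}(Z ∩ Q) = ∞`.
Otherwise `{P > 0}` and `{P < 0}` each fill half of `Q`. Walk from `x ∈ {P > 0}` to
`y ∈ {P < 0}` along the staircase that replaces the coordinates of `x` by those of `y` one at a
time: on some edge, parallel to the `k`-th axis, `P` vanishes at a point whose projection
forgetting coordinate `k` is `(y₀, …, y_{k-1}, x_{k+1}, …, x_{n-1})`. When `(x, y)` is uniform
on `Q × Q`, this projection is uniform on a facet of `Q`, so
`1/4 ≤ ∑ₖ vol (πₖ (Z ∩ Q)) ≤ n H^{n-1}(Z ∩ Q)`, the projections `πₖ` being 1-Lipschitz.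
-/

open MeasureTheory Set
open scoped ENNReal

theorem measurePreserving_piecewise_prod {ι : Type*} [Fintype ι] {α : ι → Type*}
    [∀ i, MeasurableSpace (α i)] (μ : ∀ i, Measure (α i)) [∀ i, IsProbabilityMeasure (μ i)]
    (s : Set ι) [DecidablePred (· ∈ s)] :
    MeasurePreserving (fun p : (∀ i, α i) × (∀ i, α i) => s.piecewise p.2 p.1)
      ((Measure.pi μ).prod (Measure.pi μ)) (Measure.pi μ) := by
  have hmeas : Measurable fun p : (∀ i, α i) × (∀ i, α i) => s.piecewise p.2 p.1 := by
    refine measurable_pi_lambda _ fun i => ?_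
    by_cases hi : i ∈ s <;> simp only [Set.piecewise, hi, if_true, if_false] <;> fun_prop
  refine ⟨hmeas, (Measure.pi_eq fun t ht => ?_).symm⟩
  have hpre : (fun p : (∀ i, α i) × (∀ i, α i) => s.piecewise p.2 p.1) ⁻¹' univ.pi t =
      univ.pi (s.piecewise (fun _ => univ) t) ×ˢ univ.pi (s.piecewise t fun _ => univ) := by
    ext p
    simp only [mem_preimage, mem_prod, mem_univ_pi, ← forall_and]
    refine forall_congr' fun i => ?_
    by_cases hi : i ∈ s <;> simp [hi]
  rw [Measure.map_apply hmeas (.univ_pi ht), hpre, Measure.prod_prod, Measure.pi_pi,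
    Measure.pi_pi, ← Finset.prod_mul_distrib]
  refine Finset.prod_congr rfl fun i _ => ?_
  by_cases hi : i ∈ s <;> simp [hi]

theorem Nat.exists_lt_and_not_succ {p : ℕ → Prop} {n : ℕ} (h0 : p 0) (hn : ¬p n) :
    ∃ m < n, p m ∧ ¬p (m + 1) := by
  induction n with
  | zero => exact absurd h0 hn
  | succ n ih =>
    by_cases hp : p n
    · exact ⟨n, n.lt_succ_self, hp, hn⟩
    · obtain ⟨m, hm, hpm⟩ := ih hp
      exact ⟨m, hm.trans n.lt_succ_self, hpm⟩

theorem exists_zero_removeNth_eq_removeNth_piecewise {m : ℕ} {f : (Fin (m + 1) → ℝ) → ℝ}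
    (hf : Continuous f) {I : Fin (m + 1) → Set ℝ} [∀ i, (I i).OrdConnected]
    {x y : Fin (m + 1) → ℝ} (hx : x ∈ univ.pi I) (hy : y ∈ univ.pi I)
    (hfx : 0 < f x) (hfy : f y < 0) :
    ∃ k : Fin (m + 1), ∃ z ∈ univ.pi I,
      f z = 0 ∧ k.removeNth z = k.removeNth ((Iio k).piecewise y x) := by
  let stair : ℕ → Fin (m + 1) → ℝ := fun j i => if (i : ℕ) < j then y i else x i
  obtain ⟨j, hj, hpos, hnonpos⟩ := Nat.exists_lt_and_not_succ (p := fun j => 0 < f (stair j))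
    (n := m + 1) (by simpa [stair] using hfx) (by simpa [stair, Fin.is_le] using hfy.le)
  set k : Fin (m + 1) := ⟨j, hj⟩
  have hstair : stair j = (Iio k).piecewise y x := by
    ext i; simp [stair, Set.piecewise, Fin.lt_def, k]
  have hstair_mem : stair j ∈ univ.pi I := hstair ▸ piecewise_mem_pi _ hy hx
  let path : ℝ → Fin (m + 1) → ℝ := Function.update (stair j) k
  have hpath_x : path (x k) = stair j := by
    ext i
    rcases eq_or_ne i k with rfl | hi
    · simp [path, stair, k]
    · simp [path, hi]
  have hpath_y : path (y k) = stair (j + 1) := by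
    ext i
    rcases eq_or_ne i k with rfl | hi
    · simp [path, stair, k]
    · have : (i : ℕ) < j + 1 ↔ (i : ℕ) < j := by
        have : (i : ℕ) ≠ j := fun h => hi (Fin.ext h)
        omega
      simp only [path, stair, Function.update_of_ne hi, this]
  have hzero : (0 : ℝ) ∈ uIcc (f (path (x k))) (f (path (y k))) := by
    rw [hpath_x, hpath_y]
    exact mem_uIcc.2 (Or.inr ⟨not_lt.1 hnonpos, hpos.le⟩)
  obtain ⟨t, ht, hft⟩ := intermediate_value_uIcc
    (hf.comp (continuous_const.update k continuous_id)).continuousOn hzero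
  refine ⟨k, path t, ?_, hft, by simp [path, Fin.removeNth_update, hstair]⟩
  exact update_mem_pi_iff.2 ⟨fun i hi => hstair_mem i trivial,
    fun _ => OrdConnected.uIcc_subset inferInstance (hx k trivial) (hy k trivial) ht⟩

def unitCube {ι : Type*} (a : ι → ℝ) : Set (ι → ℝ) := univ.pi fun i => Icc (a i) (a i + 1)

section UnitCube

variable {ι : Type*} (a : ι → ℝ)

theorem isCompact_unitCube : IsCompact (unitCube a) :=
  isCompact_univ_pi fun _ => isCompact_Icc

variable [Fintype ι]

theorem measurableSet_unitCube : MeasurableSet (unitCube a) :=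
  .univ_pi fun _ => measurableSet_Icc

theorem volume_restrict_unitCube :
    volume.restrict (unitCube a) = Measure.pi fun i => volume.restrict (Icc (a i) (a i + 1)) := by
  rw [volume_pi, unitCube, Measure.restrict_pi_pi]

instance (i : ι) : IsProbabilityMeasure (volume.restrict (Icc (a i) (a i + 1))) :=
  ⟨by simp [Real.volume_Icc]⟩

end UnitCube

theorem volume_removeNth_preimage_inter {m : ℕ} (k : Fin (m + 1)) (J : Set ℝ)
    (D : Set (Fin m → ℝ)) :
    volume (k.removeNth ⁻¹' D ∩ (fun x : Fin (m + 1) → ℝ => x k) ⁻¹' J) = volume J * volume D := by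
  calc volume (k.removeNth ⁻¹' D ∩ (fun x : Fin (m + 1) → ℝ => x k) ⁻¹' J)
      = volume (MeasurableEquiv.piFinSuccAbove (fun _ => ℝ) k ⁻¹' J ×ˢ D) := by
        congr 1; ext x; simp [MeasurableEquiv.piFinSuccAbove_apply, and_comm]
    _ = volume J * volume D := by
      rw [(volume_preserving_piFinSuccAbove (fun _ => ℝ) k).measure_preimage_equiv,
        Measure.volume_eq_prod, Measure.prod_prod]

theorem volume_restrict_unitCube_removeNth_preimage_le {m : ℕ} (a : Fin (m + 1) → ℝ)
    (k : Fin (m + 1)) (D : Set (Fin m → ℝ)) :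
    volume.restrict (unitCube a) (k.removeNth ⁻¹' D) ≤ volume D := by
  rw [Measure.restrict_apply' (measurableSet_unitCube a)]
  calc volume (k.removeNth ⁻¹' D ∩ unitCube a)
      ≤ volume (k.removeNth ⁻¹' D ∩ (fun x : Fin (m + 1) → ℝ => x k) ⁻¹' Icc (a k) (a k + 1)) :=
        measure_mono (inter_subset_inter_right _ fun x (hx : x ∈ univ.pi _) => hx k trivial)
    _ = volume D := by simp [volume_removeNth_preimage_inter, Real.volume_Icc]

theorem inv_two_le_measure_pos_of_bisects {Ω : Type*} [MeasurableSpace Ω] (μ : Measure Ω)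
    [IsProbabilityMeasure μ] (f : Ω → ℝ) (hbisect : μ {x | 0 < f x} = μ {x | f x < 0})
    (hnull : μ {x | f x = 0} = 0) :
    2⁻¹ ≤ μ {x | 0 < f x} := by
  have hcover : univ ⊆ {x | 0 < f x} ∪ {x | f x < 0} ∪ {x | f x = 0} := fun x _ => by
    rcases lt_trichotomy (f x) 0 with h | h | h <;> simp [h]
  rw [ENNReal.inv_le_iff_le_mul (by simp) (by simp), two_mul]
  calc 1 = μ univ := measure_univ.symm
    _ ≤ μ {x | 0 < f x} + μ {x | f x < 0} + μ {x | f x = 0} :=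
      (measure_mono hcover).trans <| (measure_union_le _ _).trans <| by
        gcongr; exact measure_union_le _ _
    _ = μ {x | 0 < f x} + μ {x | 0 < f x} := by rw [hnull, add_zero, hbisect]

theorem Fin.lipschitzWith_removeNth {m : ℕ} (k : Fin (m + 1)) :
    LipschitzWith 1 (k.removeNth : (Fin (m + 1) → ℝ) → Fin m → ℝ) :=
  LipschitzWith.of_edist_le fun x y => edist_pi_le_iff.2 fun _ => edist_le_pi_edist x y _

theorem one_le_four_mul_sum_volume_removeNth_image {m : ℕ} {f : (Fin (m + 1) → ℝ) → ℝ}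
    (hf : Continuous f) (a : Fin (m + 1) → ℝ)
    (hbisect : volume ({x | 0 < f x} ∩ unitCube a) = volume ({x | f x < 0} ∩ unitCube a))
    (hnull : volume ({x | f x = 0} ∩ unitCube a) = 0) :
    1 ≤ 4 * ∑ k : Fin (m + 1), volume (k.removeNth '' ({x | f x = 0} ∩ unitCube a)) := by
  set Q := unitCube a
  set D : Fin (m + 1) → Set (Fin m → ℝ) := fun k => k.removeNth '' ({x | f x = 0} ∩ Q)
  set μ := volume.restrict Q
  have hQ : MeasurableSet Q := measurableSet_unitCube a
  have hμ : μ = Measure.pi fun i => volume.restrict (Icc (a i) (a i + 1)) :=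
    volume_restrict_unitCube a
  have : IsProbabilityMeasure μ := hμ ▸ inferInstance
  have hbisect' : μ {x | 0 < f x} = μ {x | f x < 0} := by
    rwa [Measure.restrict_apply' hQ, Measure.restrict_apply' hQ]
  have hpos : 2⁻¹ ≤ μ {x | 0 < f x} :=
    inv_two_le_measure_pos_of_bisects μ f hbisect' (by rwa [Measure.restrict_apply' hQ])
  have hcover : {x | 0 < f x} ×ˢ {x | f x < 0} ≤ᵐ[μ.prod μ]
      ⋃ k, (fun p => (Iio k).piecewise p.2 p.1) ⁻¹' (k.removeNth ⁻¹' D k) := by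
    have hQQ : ∀ᵐ p ∂μ.prod μ, p ∈ Q ×ˢ Q := by
      rw [Measure.prod_restrict]
      exact ae_restrict_mem (hQ.prod hQ)
    filter_upwards [hQQ] with p ⟨hxQ, hyQ⟩ ⟨hx, hy⟩
    obtain ⟨k, z, hzQ, hz, hzk⟩ := exists_zero_removeNth_eq_removeNth_piecewise hf hxQ hyQ hx hy
    exact mem_iUnion.2 ⟨k, z, ⟨hz, hzQ⟩, hzk⟩
  have hstair (k : Fin (m + 1)) :
      (μ.prod μ) ((fun p => (Iio k).piecewise p.2 p.1) ⁻¹' (k.removeNth ⁻¹' D k)) ≤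
        volume (D k) := by
    have hD : MeasurableSet (D k) :=
      ((isCompact_unitCube a).inter_left (isClosed_eq hf continuous_const)).image
        (Fin.lipschitzWith_removeNth k).continuous |>.measurableSet
    rw [hμ, (measurePreserving_piecewise_prod _ (Iio k)).measure_preimage
      (hD.preimage (Fin.lipschitzWith_removeNth k).continuous.measurable).nullMeasurableSet, ← hμ]
    exact volume_restrict_unitCube_removeNth_preimage_le a k (D k)
  calc 1 = 4 * (2⁻¹ * 2⁻¹) := by
        rw [← ENNReal.mul_inv (by simp) (by simp)]; norm_num
        exact (ENNReal.mul_inv_cancel (by norm_num) (by norm_num)).symm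
    _ ≤ 4 * (μ.prod μ) ({x | 0 < f x} ×ˢ {x | f x < 0}) := by
      rw [Measure.prod_prod, ← hbisect']; gcongr
    _ ≤ 4 * ∑ k, volume (D k) := by
      gcongr
      exact (measure_mono_ae hcover).trans <| (measure_iUnion_fintype_le _ _).trans <|
        Finset.sum_le_sum fun k _ => hstair k

theorem LipschitzWith.volume_image_le_hausdorffMeasure {X ι : Type*} [EMetricSpace X]
    [MeasurableSpace X] [BorelSpace X] [Fintype ι] {g : X → ι → ℝ} (hg : LipschitzWith 1 g)
    (s : Set X) : volume (g '' s) ≤ μH[Fintype.card ι] s := by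
  calc volume (g '' s) = μH[Fintype.card ι] (g '' s) := by rw [hausdorffMeasure_pi_real]
    _ ≤ (1 : NNReal) ^ (Fintype.card ι : ℝ) * μH[Fintype.card ι] s :=
      hg.hausdorffMeasure_image_le (Nat.cast_nonneg _) s
    _ = μH[Fintype.card ι] s := by simp

theorem inv_le_hausdorffMeasure_of_bisects {m : ℕ} {f : (Fin (m + 1) → ℝ) → ℝ}
    (hf : Continuous f) (a : Fin (m + 1) → ℝ)
    (hbisect : volume ({x | 0 < f x} ∩ unitCube a) = volume ({x | f x < 0} ∩ unitCube a)) :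
    (4 * (m + 1 : ℝ≥0∞))⁻¹ ≤
      μH[m] (WithLp.ofLp ⁻¹' ({x | f x = 0} ∩ unitCube a) :
        Set (EuclideanSpace ℝ (Fin (m + 1)))) := by
  set Z : Set (EuclideanSpace ℝ (Fin (m + 1))) := WithLp.ofLp ⁻¹' ({x | f x = 0} ∩ unitCube a)
  have hZ : WithLp.ofLp '' Z = {x | f x = 0} ∩ unitCube a :=
    image_preimage_eq _ (WithLp.ofLp_surjective 2)
  rcases eq_top_or_lt_top (μH[m] Z) with htop | hfin
  · simp [htop]
  have hnull : volume ({x | f x = 0} ∩ unitCube a) = 0 := by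
    have hZ0 : μH[(m + 1 : ℕ)] Z = 0 := (Measure.hausdorffMeasure_zero_or_top
      (by push_cast; linarith) Z).resolve_right hfin.ne
    rw [← hZ, ← le_zero_iff, ← hZ0]
    simpa using (PiLp.lipschitzWith_ofLp 2 _).volume_image_le_hausdorffMeasure Z
  have hproj (k : Fin (m + 1)) :
      volume (k.removeNth '' ({x | f x = 0} ∩ unitCube a)) ≤ μH[m] Z := by
    rw [← hZ, image_image]
    have hg : LipschitzWith 1 (k.removeNth ∘ @WithLp.ofLp 2 (Fin (m + 1) → ℝ)) := by
      simpa using (Fin.lipschitzWith_removeNth k).comp (PiLp.lipschitzWith_ofLp 2 _)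
    simpa using hg.volume_image_le_hausdorffMeasure Z
  rw [ENNReal.inv_le_iff_le_mul (by simp) (by simp [ENNReal.mul_eq_top])]
  calc 1 ≤ 4 * ∑ k : Fin (m + 1), volume (k.removeNth '' ({x | f x = 0} ∩ unitCube a)) :=
        one_le_four_mul_sum_volume_removeNth_image hf a hbisect hnull
    _ ≤ 4 * ∑ _k : Fin (m + 1), μH[m] Z := by gcongr with k; exact hproj k
    _ = 4 * (m + 1) * μH[m] Z := by simp [mul_assoc]

/-- **Basic area estimate.** There is `c(n) > 0` such that if a nonzero polynomial `P` bisects a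
unit cube `Q ⊆ ℝ^n`, then the zero set of `P` has `(n-1)`-dimensional Hausdorff measure at least
`c(n)` inside `Q`. -/
theorem basic_area_estimate (n : ℕ) (hn : 1 ≤ n) :
    ∃ c : ℝ, 0 < c ∧
      ∀ (a : EuclideanSpace ℝ (Fin n)) (P : MvPolynomial (Fin n) ℝ), P ≠ 0 →
        (volume {x ∈ {x : EuclideanSpace ℝ (Fin n) | ∀ i, a i ≤ x i ∧ x i ≤ a i + 1} |
              0 < MvPolynomial.eval (fun j => x j) P}
          = volume {x ∈ {x : EuclideanSpace ℝ (Fin n) | ∀ i, a i ≤ x i ∧ x i ≤ a i + 1} |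
              MvPolynomial.eval (fun j => x j) P < 0}) →
        ENNReal.ofReal c ≤
          μH[(n:ℝ) - 1] ({x : EuclideanSpace ℝ (Fin n) | MvPolynomial.eval (fun j => x j) P = 0}
            ∩ {x | ∀ i, a i ≤ x i ∧ x i ≤ a i + 1}) := by
  obtain ⟨m, rfl⟩ := Nat.exists_eq_add_of_le' hn
  refine ⟨(4 * (m + 1))⁻¹, by positivity, fun a P _ hbisect => ?_⟩
  set f : (Fin (m + 1) → ℝ) → ℝ := fun z => MvPolynomial.eval z P
  have hvol (S : Set (Fin (m + 1) → ℝ)) : volume (WithLp.ofLp ⁻¹' S) = volume S :=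
    (EuclideanSpace.volume_preserving_symm_measurableEquiv_toLp _).measure_preimage_equiv S
  have hbisect' : volume ({z | 0 < f z} ∩ unitCube a.ofLp)
      = volume ({z | f z < 0} ∩ unitCube a.ofLp) := by
    rw [← hvol, ← hvol]
    convert hbisect using 2 <;> ext x <;> simp [unitCube, f, and_comm, -pi_univ_Icc]
  have hZ : {x : EuclideanSpace ℝ (Fin (m + 1)) | MvPolynomial.eval (fun j => x j) P = 0}
      ∩ {x | ∀ i, a i ≤ x i ∧ x i ≤ a i + 1} =
        WithLp.ofLp ⁻¹' ({z | f z = 0} ∩ unitCube a.ofLp) := by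
    ext x; simp [unitCube, f, -pi_univ_Icc]
  rw [show ((m + 1 : ℕ) : ℝ) - 1 = m by push_cast; ring, hZ,
    ENNReal.ofReal_inv_of_pos (by positivity)]
  exact_mod_cast inv_le_hausdorffMeasure_of_bisects (MvPolynomial.continuous_eval P) a.ofLp hbisect'
end

section
/- There is a constant c(n) > 0 depending only on n such that the following holds. Let W : ℝ^n → ℝ be a convex function satisfying W(λ v) = |λ| W(v) for all λ ∈ ℝ and v ∈ ℝ^n, and W(v) ≥ ‖v‖ for all v ∈ ℝ^n. Let v_1, …, v_n ∈ ℝ^n be unit vectors with |det(v_1, …, v_n)| ≥ θ for some θ > 0. Then the set K = {v ∈ ℝ^n : ‖v‖ ≤ 1 and W(v) ≤ 1} has Lebesgue measure Vol(K) ≥ c(n) θ / ∏_{j=1}^n W(v_j). -/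
open MeasureTheory
open scoped ENNReal

/-!
Convexity and absolute homogeneity make `W` a seminorm, so the linear map `x ↦ ∑ xⱼ vⱼ` sends
the box `|xⱼ| ≤ 1 / (n W(vⱼ))` into `{W ≤ 1}`, which lies in `K` because `‖·‖ ≤ W`. The image
has volume `|det(v₁, …, vₙ)| ∏ⱼ 2 / (n W(vⱼ))`, so `c(n) = (2 / n)ⁿ` works.
-/

section AbsHomogeneous

variable {E : Type*} [AddCommGroup E] [Module ℝ E] {W : E → ℝ}

theorem ConvexOn.add_le_of_abs_homogeneous (hconv : ConvexOn ℝ Set.univ W)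
    (hhom : ∀ (c : ℝ) (x : E), W (c • x) = |c| * W x) (x y : E) :
    W (x + y) ≤ W x + W y := by
  have hmid := hconv.2 (Set.mem_univ x) (Set.mem_univ y) (by norm_num : (0 : ℝ) ≤ 1 / 2)
    (by norm_num : (0 : ℝ) ≤ 1 / 2) (by norm_num)
  have hxy : x + y = (2 : ℝ) • ((1 / 2 : ℝ) • x + (1 / 2 : ℝ) • y) := by
    rw [smul_add, smul_smul, smul_smul]; norm_num
  rw [hxy, hhom, abs_two]
  simp only [smul_eq_mul] at hmid
  linarith

theorem ConvexOn.apply_sum_smul_le_one (hconv : ConvexOn ℝ Set.univ W)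
    (hhom : ∀ (c : ℝ) (x : E), W (c • x) = |c| * W x) {ι : Type*} [Fintype ι] {v : ι → E}
    (hv : ∀ j, 0 < W (v j)) {x : ι → ℝ} (hx : ∀ j, |x j| ≤ (Fintype.card ι * W (v j))⁻¹) :
    W (∑ j, x j • v j) ≤ 1 := by
  have hW0 : W 0 = 0 := by simpa using hhom 0 0
  calc W (∑ j, x j • v j) ≤ ∑ j, W (x j • v j) :=
        Finset.le_sum_of_subadditive W hW0.le (hconv.add_le_of_abs_homogeneous hhom) _ _
    _ ≤ ∑ _j : ι, (Fintype.card ι : ℝ)⁻¹ := by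
        refine Finset.sum_le_sum fun j _ => ?_
        calc W (x j • v j) = |x j| * W (v j) := hhom _ _
          _ ≤ (Fintype.card ι * W (v j))⁻¹ * W (v j) :=
              mul_le_mul_of_nonneg_right (hx j) (hv j).le
          _ = (Fintype.card ι : ℝ)⁻¹ := by field_simp [(hv j).ne']
    _ ≤ 1 := by
        rw [Finset.sum_const, Finset.card_univ, nsmul_eq_mul]
        exact mul_inv_le_one

end AbsHomogeneous

theorem EuclideanSpace.volume_setOf_forall_abs_le {ι : Type*} [Fintype ι] (r : ι → ℝ) :
    volume {x : EuclideanSpace ℝ ι | ∀ j, |x j| ≤ r j} = ∏ j, ENNReal.ofReal (2 * r j) := by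
  have hbox : {x : EuclideanSpace ℝ ι | ∀ j, |x j| ≤ r j} =
      (MeasurableEquiv.toLp 2 (ι → ℝ)).symm ⁻¹' Set.univ.pi fun j => Set.Icc (-r j) (r j) := by
    ext x
    simp only [Set.mem_ofPred_eq, Set.mem_preimage, Set.mem_univ_pi, Set.mem_Icc, abs_le]
    rfl
  rw [hbox, (EuclideanSpace.volume_preserving_symm_measurableEquiv_toLp ι).measure_preimage
    (MeasurableSet.univ_pi fun _ => measurableSet_Icc).nullMeasurableSet, volume_pi_pi]
  simp only [Real.volume_Icc]
  ring_nf

theorem Matrix.toLpLin_of_columns_apply {ι : Type*} [Fintype ι] [DecidableEq ι]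
    (v : ι → EuclideanSpace ℝ ι) (x : EuclideanSpace ℝ ι) :
    Matrix.toLpLin 2 2 (Matrix.of fun i j => v j i) x = ∑ j, x j • v j := by
  ext i
  simp [Matrix.toLpLin_apply, Matrix.mulVec, dotProduct, mul_comm]

theorem ConvexOn.le_volume_setOf_le_one {ι : Type*} [Fintype ι] [DecidableEq ι]
    {W : EuclideanSpace ℝ ι → ℝ} (hconv : ConvexOn ℝ Set.univ W)
    (hhom : ∀ (c : ℝ) x, W (c • x) = |c| * W x) {v : ι → EuclideanSpace ℝ ι}
    (hv : ∀ j, 0 < W (v j)) :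
    ENNReal.ofReal ((2 / Fintype.card ι) ^ Fintype.card ι *
        |(Matrix.of fun i j => v j i).det| / ∏ j, W (v j)) ≤
      volume {u : EuclideanSpace ℝ ι | W u ≤ 1} := by
  set V : Matrix ι ι ℝ := Matrix.of fun i j => v j i
  set r : ι → ℝ := fun j => (Fintype.card ι * W (v j))⁻¹
  have hr : ∀ j, 0 ≤ r j := fun j => inv_nonneg.2 (mul_nonneg (Nat.cast_nonneg _) (hv j).le)
  set box := {x : EuclideanSpace ℝ ι | ∀ j, |x j| ≤ r j}
  have himage : Matrix.toLpLin 2 2 V '' box ⊆ {u | W u ≤ 1} := by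
    rintro _ ⟨x, hx, rfl⟩
    rw [Set.mem_ofPred_eq, Matrix.toLpLin_of_columns_apply]
    exact hconv.apply_sum_smul_le_one hhom hv hx
  have hvol : volume (Matrix.toLpLin 2 2 V '' box) = ENNReal.ofReal (|V.det| * ∏ j, 2 * r j) := by
    rw [Measure.addHaar_image_linearMap, LinearMap.det_toLpLin,
      EuclideanSpace.volume_setOf_forall_abs_le, ENNReal.ofReal_mul (abs_nonneg _),
      ENNReal.ofReal_prod_of_nonneg fun j _ => mul_nonneg zero_le_two (hr j)]
  have hprod : ∏ j, 2 * r j = (2 / Fintype.card ι) ^ Fintype.card ι / ∏ j, W (v j) := by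
    have hfactor : ∀ j, 2 * r j = 2 / Fintype.card ι / W (v j) := fun j => by
      simp only [r, mul_inv, div_eq_mul_inv, mul_assoc]
    simp_rw [hfactor, Finset.prod_div_distrib, Finset.prod_const, Finset.card_univ, div_pow]
  calc _ = volume (Matrix.toLpLin 2 2 V '' box) := by
        rw [hvol, hprod]
        congr 1
        ring
    _ ≤ _ := measure_mono himage

theorem convex_body_volume_lower_bound_general (n : ℕ) :
    ∃ c : ℝ, 0 < c ∧
      ∀ (W : EuclideanSpace ℝ (Fin n) → ℝ),
        ConvexOn ℝ Set.univ W →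
        (∀ (lam : ℝ) (v : EuclideanSpace ℝ (Fin n)), W (lam • v) = |lam| * W v) →
        (∀ v : EuclideanSpace ℝ (Fin n), ‖v‖ ≤ W v) →
      ∀ (v : Fin n → EuclideanSpace ℝ (Fin n)), (∀ j, ‖v j‖ = 1) →
      ∀ θ : ℝ, 0 < θ →
        θ ≤ |Matrix.det (Matrix.of fun i j : Fin n => v j i)| →
        ENNReal.ofReal (c * θ / ∏ j : Fin n, W (v j)) ≤
          volume {u : EuclideanSpace ℝ (Fin n) | ‖u‖ ≤ 1 ∧ W u ≤ 1} := by
  refine ⟨(2 / n) ^ n, ?_, ?_⟩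
  · rcases n.eq_zero_or_pos with rfl | hn
    · simp -- `(2 / 0) ^ 0 = 1`
    · exact pow_pos (div_pos two_pos (Nat.cast_pos.2 hn)) n
  intro W hconv hhom hnorm v hunit θ _ hdet
  have hv : ∀ j, 0 < W (v j) := fun j => (hunit j ▸ one_pos).trans_le (hnorm (v j))
  have hK : {u | W u ≤ 1} ⊆ {u : EuclideanSpace ℝ (Fin n) | ‖u‖ ≤ 1 ∧ W u ≤ 1} :=
    fun u hu => ⟨(hnorm u).trans hu, hu⟩
  refine le_trans ?_ ((hconv.le_volume_setOf_le_one hhom hv).trans (measure_mono hK))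
  rw [Fintype.card_fin]
  gcongr
  exact Finset.prod_nonneg fun j _ => (hv j).le

/-- There is `c(n) > 0` such that: if `W : ℝ^n → ℝ` is convex, absolutely homogeneous of degree 1,
and `W(v) ≥ ‖v‖` for all `v`, and `v_1, …, v_n` are unit vectors with `|det(v_1, …, v_n)| ≥ θ`
for some `θ > 0`, then `K = {v : ‖v‖ ≤ 1, W(v) ≤ 1}` has volume at least
`c(n) θ / ∏_j W(v_j)`. -/
theorem convex_body_volume_lower_bound (n : ℕ) (hn : 1 ≤ n) :
    ∃ c : ℝ, 0 < c ∧
      ∀ (W : EuclideanSpace ℝ (Fin n) → ℝ),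
        ConvexOn ℝ Set.univ W →
        (∀ (lam : ℝ) (v : EuclideanSpace ℝ (Fin n)), W (lam • v) = |lam| * W v) →
        (∀ v : EuclideanSpace ℝ (Fin n), ‖v‖ ≤ W v) →
      ∀ (v : Fin n → EuclideanSpace ℝ (Fin n)), (∀ j, ‖v j‖ = 1) →
      ∀ θ : ℝ, 0 < θ →
        θ ≤ |Matrix.det (Matrix.of fun i j : Fin n => v j i)| →
        ENNReal.ofReal (c * θ / ∏ j : Fin n, W (v j)) ≤
          volume {u : EuclideanSpace ℝ (Fin n) | ‖u‖ ≤ 1 ∧ W u ≤ 1} :=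
  convex_body_volume_lower_bound_general n
end
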